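/- Let {E_1, …, E_m} be a unitary error set on ℂ^N and let K ≤ N be a positive integer. For a ∈ [N] and b ∈ [K], define the N×(Km) matrix B_{ab} = (1/√N)·Σ_{i=1}^m E_i |a⟩⟨b| ⊗ ⟨i|. Then Σ_{a=1}^N Σ_{b=1}^K B_{ab}† B_{ab} = I_{Km} and Σ_{a=1}^N Σ_{b=1}^K B_{ab} B_{ab}† = (Km/N)·I_N. -/

import Mathlib

open scoped Kronecker ComplexOrder
open Matrix MeasureTheory ProbabilityTheory

noncomputable section

/-- The positive semidefinite square root of a positive semidefinite matrix
(the definition removed from Mathlib, restored with its old meaning). -/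
def Matrix.PosSemidef.sqrt {n : Type*} [Fintype n] [DecidableEq n] {𝕜 : Type*} [RCLike 𝕜]
    {A : Matrix n n 𝕜} (hA : A.PosSemidef) : Matrix n n 𝕜 :=
  hA.1.eigenvectorUnitary.1 * diagonal ((↑) ∘ (√·) ∘ hA.1.eigenvalues) *
  (star hA.1.eigenvectorUnitary : Matrix n n 𝕜)

/-- The Euclidean (ℓ²) norm of a finitely indexed complex vector. -/
def enorm2 {ι : Type*} [Fintype ι] (x : ι → ℂ) : ℝ :=
  Real.sqrt (∑ i, ‖x i‖ ^ 2)

/-- `T` is a `δ`-approximate isometry: every singular value lies in `[1-δ, 1+δ]`,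
equivalently `(1-δ)‖c‖ ≤ ‖Tc‖ ≤ (1+δ)‖c‖` for every vector `c`. -/
def IsApproxIsometry {ι κ : Type*} [Fintype ι] [Fintype κ] (δ : ℝ) (T : Matrix ι κ ℂ) : Prop :=
  ∀ c : κ → ℂ,
    (1 - δ) * enorm2 c ≤ enorm2 (T.mulVec c) ∧ enorm2 (T.mulVec c) ≤ (1 + δ) * enorm2 c

/-- A unitary error set: each `E i` is unitary and `tr((E i)ᴴ E j) = 0` for `i ≠ j`. -/
def IsUnitaryErrorSet {ι : Type*} {N : ℕ} (E : ι → Matrix (Fin N) (Fin N) ℂ) : Prop :=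
  (∀ i, (E i)ᴴ * E i = 1 ∧ E i * (E i)ᴴ = 1) ∧
    ∀ i j : ι, i ≠ j → ((E i)ᴴ * E j).trace = 0

/-- The `N × (Km)` matrix `Y = Σ_i E_i V ⊗ ⟨i|`, whose column indexed by `(j, i)`
is the vector `E_i · V · e_j`. -/
def shiftMat {N K m : ℕ} (E : Fin m → Matrix (Fin N) (Fin N) ℂ) (V : Matrix (Fin N) (Fin K) ℂ) :
    Matrix (Fin N) (Fin K × Fin m) ℂ :=
  Matrix.of fun a ji => (E ji.2 * V) a ji.1

/-- The operator norm (largest singular value) of a complex matrix. -/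
def opNorm {ι κ : Type*} [Fintype ι] [Fintype κ] (A : Matrix ι κ ℂ) : ℝ :=
  sSup {r | ∃ c : κ → ℂ, enorm2 c = 1 ∧ r = enorm2 (A.mulVec c)}

/-- The smallest singular value of a (tall) complex matrix. -/
def sMin {ι κ : Type*} [Fintype ι] [Fintype κ] (A : Matrix ι κ ℂ) : ℝ :=
  sInf {r | ∃ c : κ → ℂ, enorm2 c = 1 ∧ r = enorm2 (A.mulVec c)}

/-- `isometrize G = G (GᴴG)^{-1/2}`: round all singular values of `G` to `1`. -/
def isometrize {N K : ℕ} (G : Matrix (Fin N) (Fin K) ℂ) : Matrix (Fin N) (Fin K) ℂ :=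
  G * ((Matrix.posSemidef_conjTranspose_mul_self G).sqrt)⁻¹

/-- Round the singular values of a wide matrix `D̂` to one: `(D̂ D̂ᴴ)^{-1/2} D̂`. -/
def coisometrize {ι : Type*} [Fintype ι] [DecidableEq ι] {N : ℕ}
    (Dhat : Matrix ι (Fin N) ℂ) : Matrix ι (Fin N) ℂ :=
  ((Matrix.posSemidef_self_mul_conjTranspose Dhat).sqrt)⁻¹ * Dhat

end

/-! Entrywise, `Σ_{a,b} B_{ab}ᴴ B_{ab}` has `((j,i),(j',i'))` entry `δ_{jj'} tr(E_iᴴ E_{i'}) / N`,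
which unitarity and trace-orthogonality of the error set turn into `δ_{jj'} δ_{ii'}`. Dually,
`Σ_{a,b} B_{ab} B_{ab}ᴴ = (K/N) Σ_i E_i E_iᴴ = (Km/N) I`. -/

section ErrorBlock

variable {R n κ ι : Type*} [Semiring R] [StarRing R] [Fintype n] [Fintype κ] [DecidableEq κ]

/-- The paper's `Σ_i E_i |a⟩⟨b| ⊗ ⟨i|`, without the factor `1/√N`. -/
def errorBlock (E : ι → Matrix n n R) (a : n) (b : κ) : Matrix n (κ × ι) R :=
  of fun x ji => if ji.1 = b then E ji.2 x a else 0

theorem sum_conjTranspose_mul_errorBlock (E : ι → Matrix n n R) :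
    ∑ a : n, ∑ b : κ, (errorBlock E a b)ᴴ * errorBlock E a b =
      of fun ji ji' => if ji.1 = ji'.1 then ((E ji.2)ᴴ * E ji'.2).trace else 0 := by
  ext ⟨j, i⟩ ⟨j', i'⟩
  simp [errorBlock, Matrix.sum_apply, mul_apply, trace, apply_ite star, ite_mul]

theorem sum_errorBlock_mul_conjTranspose [Fintype ι] (E : ι → Matrix n n R) :
    ∑ a : n, ∑ b : κ, errorBlock E a b * (errorBlock E a b)ᴴ =
      Fintype.card κ • ∑ i, E i * (E i)ᴴ := by
  ext x y
  simp only [errorBlock, Matrix.sum_apply, mul_apply, of_apply, conjTranspose_apply, apply_ite star,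
    star_zero, mul_ite, ite_mul, zero_mul, mul_zero, Fintype.sum_prod_type, Finset.sum_ite_irrel,
    Finset.sum_const_zero, Finset.sum_ite_eq', Finset.mem_univ, ↓reduceIte, Finset.sum_const,
    Finset.card_univ, nsmul_eq_mul, Matrix.smul_apply]
  rw [← Finset.mul_sum, Finset.sum_comm]

end ErrorBlock

namespace IsUnitaryErrorSet

variable {ι : Type*} {N : ℕ} {E : ι → Matrix (Fin N) (Fin N) ℂ}

theorem trace_conjTranspose_mul [DecidableEq ι] (hE : IsUnitaryErrorSet E) (i j : ι) :
    ((E i)ᴴ * E j).trace = if i = j then (N : ℂ) else 0 := by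
  split_ifs with h
  · rw [h, (hE.1 j).1, trace_one, Fintype.card_fin]
  · exact hE.2 i j h

theorem sum_conjTranspose_mul_errorBlock [DecidableEq ι] {κ : Type*} [Fintype κ] [DecidableEq κ]
    (hE : IsUnitaryErrorSet E) :
    ∑ a, ∑ b : κ, (errorBlock E a b)ᴴ * errorBlock E a b = (N : ℂ) • 1 := by
  ext ⟨j, i⟩ ⟨j', i'⟩
  rw [_root_.sum_conjTranspose_mul_errorBlock]
  simp [hE.trace_conjTranspose_mul, one_apply, ite_and]

theorem sum_errorBlock_mul_conjTranspose [Fintype ι] {κ : Type*} [Fintype κ] [DecidableEq κ]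
    (hE : IsUnitaryErrorSet E) :
    ∑ a, ∑ b : κ, errorBlock E a b * (errorBlock E a b)ᴴ =
      ((Fintype.card κ * Fintype.card ι : ℕ) : ℂ) • 1 := by
  rw [_root_.sum_errorBlock_mul_conjTranspose, Finset.sum_congr rfl fun i _ => (hE.1 i).2,
    Finset.sum_const, Finset.card_univ, smul_smul, Nat.cast_smul_eq_nsmul]

end IsUnitaryErrorSet

theorem stmt_9_general {N K m : ℕ} (hN : 0 < N)
    (E : Fin m → Matrix (Fin N) (Fin N) ℂ) (hE : IsUnitaryErrorSet E)
    (B : Fin N → Fin K → Matrix (Fin N) (Fin K × Fin m) ℂ)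
    (hB : ∀ a b, B a b = Matrix.of fun (x : Fin N) (ji : Fin K × Fin m) =>
      (1 / ((Real.sqrt N : ℝ) : ℂ)) * (if ji.1 = b then E ji.2 x a else 0)) :
    (∑ a : Fin N, ∑ b : Fin K, (B a b)ᴴ * B a b) = 1 ∧
    (∑ a : Fin N, ∑ b : Fin K, B a b * (B a b)ᴴ) = (((K * m : ℕ) : ℂ) / (N : ℂ)) • 1 := by
  set c : ℂ := 1 / ((Real.sqrt N : ℝ) : ℂ)
  have hc : star c * c = (N : ℂ)⁻¹ := by
    simp only [c, one_div, star_inv₀, Complex.star_def, Complex.conj_ofReal]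
    rw [← mul_inv, ← Complex.ofReal_mul, Real.mul_self_sqrt N.cast_nonneg, Complex.ofReal_natCast]
  obtain rfl : B = fun a b => c • errorBlock E a b := by
    ext a b x ji
    simp [hB, errorBlock]
  have hN' : (N : ℂ) ≠ 0 := Nat.cast_ne_zero.mpr hN.ne'
  simp only [conjTranspose_smul, Matrix.smul_mul, Matrix.mul_smul, smul_smul, ← Finset.smul_sum]
  rw [hE.sum_conjTranspose_mul_errorBlock, hE.sum_errorBlock_mul_conjTranspose, mul_comm c, hc]
  simp [hN', div_eq_inv_mul, smul_smul]

/-- for the matrices `B_{ab} = (1/√N)·Σ_i E_i |a⟩⟨b| ⊗ ⟨i|` built from a unitary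
error set, `Σ_{a,b} B_{ab}ᴴ B_{ab} = I_{Km}` and `Σ_{a,b} B_{ab} B_{ab}ᴴ = (Km/N)·I_N`. -/
theorem stmt_9 {N K m : ℕ} (hN : 0 < N) (hK : 0 < K) (hm : 0 < m) (hKN : K ≤ N)
    (E : Fin m → Matrix (Fin N) (Fin N) ℂ) (hE : IsUnitaryErrorSet E)
    (B : Fin N → Fin K → Matrix (Fin N) (Fin K × Fin m) ℂ)
    (hB : ∀ a b, B a b = Matrix.of fun (x : Fin N) (ji : Fin K × Fin m) =>
      (1 / ((Real.sqrt N : ℝ) : ℂ)) * (if ji.1 = b then E ji.2 x a else 0)) :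
    (∑ a : Fin N, ∑ b : Fin K, (B a b)ᴴ * B a b) = 1 ∧
    (∑ a : Fin N, ∑ b : Fin K, B a b * (B a b)ᴴ) = (((K * m : ℕ) : ℂ) / (N : ℂ)) • 1 :=
  stmt_9_general hN E hE B hB
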